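/- arXiv:2205.14448 — 2 statements merged into one kernel-verified Lean document; each statement's English description precedes it below -/
import Mathlib

section
/- For 0 < w < a and b > 0, the difference of the two partial areas A₂ − A₁ = 2∫_{-w}^{a} f₁ − 2∫_{-a}^{-w} f₁ satisfies A₂ − A₁ = (8/3)·b·w, where f₁(x) = b√((a²-x²)/(a²+2wx+w²)). -/
/-!
Write `f₁ = b √D` with `D x = (a² - x²) / (a² + 2wx + w²)`. The map `ψ x = -x - 2w D x` satisfies
`D ∘ ψ = D`, sends `-w ↦ -w` and `a ↦ -a`, and has derivative `-1 - 2w D'`. Substituting `y = ψ x`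
in `A₁` therefore gives `A₁ = A₂ + 4bw ∫_{-w}^{a} √D D'`, and the last integral is
`∫_{D(-w)}^{D(a)} √t dt = ∫_1^0 √t dt = -2/3`.
-/

open Set intervalIntegral

noncomputable section

def profileDenom (a w x : ℝ) : ℝ :=
  a ^ 2 + 2 * w * x + w ^ 2

def profileSq (a w x : ℝ) : ℝ :=
  (a ^ 2 - x ^ 2) / profileDenom a w x

def profileSqDeriv (a w x : ℝ) : ℝ :=
  -2 * (a ^ 2 + w * x) * (x + w) / profileDenom a w x ^ 2

def profileReflect (a w x : ℝ) : ℝ :=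
  -x - 2 * w * profileSq a w x

end

lemma integral_sqrt_zero_one : ∫ t in (0 : ℝ)..1, √t = 2 / 3 := by
  simp_rw [Real.sqrt_eq_rpow]
  rw [integral_rpow (by norm_num)]
  norm_num

section

variable {a w x : ℝ}

lemma hasDerivAt_profileSq (hq : profileDenom a w x ≠ 0) :
    HasDerivAt (profileSq a w) (profileSqDeriv a w x) x := by
  have hnum : HasDerivAt (fun y => a ^ 2 - y ^ 2) (-(2 * x)) x := by
    simpa using (hasDerivAt_pow 2 x).const_sub (a ^ 2)
  have hden : HasDerivAt (profileDenom a w) (2 * w) x := by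
    have := (((hasDerivAt_id x).const_mul (2 * w)).const_add (a ^ 2)).add_const (w ^ 2)
    rwa [mul_one] at this
  refine (hnum.div hden hq).congr_deriv ?_
  rw [profileSqDeriv]
  field_simp
  rw [profileDenom]
  ring

lemma hasDerivAt_profileReflect (hq : profileDenom a w x ≠ 0) :
    HasDerivAt (profileReflect a w) (-1 - 2 * w * profileSqDeriv a w x) x :=
  (hasDerivAt_id x).neg.sub ((hasDerivAt_profileSq hq).const_mul (2 * w))

lemma continuousOn_profileSq {s : Set ℝ} (hs : ∀ x ∈ s, profileDenom a w x ≠ 0) :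
    ContinuousOn (profileSq a w) s :=
  ContinuousOn.div (by fun_prop) (by unfold profileDenom; fun_prop) hs

lemma continuousOn_profileSqDeriv {s : Set ℝ} (hs : ∀ x ∈ s, profileDenom a w x ≠ 0) :
    ContinuousOn (profileSqDeriv a w) s :=
  ContinuousOn.div (by fun_prop) (by unfold profileDenom; fun_prop)
    fun x hx => pow_ne_zero 2 (hs x hx)

lemma numer_profileReflect (hq : profileDenom a w x ≠ 0) :
    a ^ 2 - profileReflect a w x ^ 2 =
      (a ^ 2 - w ^ 2) ^ 2 * (a ^ 2 - x ^ 2) / profileDenom a w x ^ 2 := by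
  rw [profileReflect, profileSq]
  field_simp
  rw [profileDenom]
  ring

lemma profileDenom_profileReflect (hq : profileDenom a w x ≠ 0) :
    profileDenom a w (profileReflect a w x) = (a ^ 2 - w ^ 2) ^ 2 / profileDenom a w x := by
  rw [profileDenom.eq_1 a w (profileReflect a w x), profileReflect, profileSq]
  field_simp
  rw [profileDenom]
  ring

lemma profileSq_profileReflect (hq : profileDenom a w x ≠ 0) (ha : a ^ 2 ≠ w ^ 2) :
    profileSq a w (profileReflect a w x) = profileSq a w x := by
  have ha' : a ^ 2 - w ^ 2 ≠ 0 := sub_ne_zero.mpr ha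
  rw [profileSq, numer_profileReflect hq, profileDenom_profileReflect hq, profileSq]
  field_simp

lemma profileSq_self : profileSq a w a = 0 := by
  simp [profileSq]

lemma profileSq_neg (ha : a ^ 2 ≠ w ^ 2) : profileSq a w (-w) = 1 := by
  rw [profileSq, profileDenom, div_eq_one_iff_eq] <;> [ring; (contrapose! ha; linarith)]

lemma profileReflect_self : profileReflect a w a = -a := by
  simp [profileReflect, profileSq_self]

lemma profileReflect_neg (ha : a ^ 2 ≠ w ^ 2) : profileReflect a w (-w) = -w := by
  rw [profileReflect, profileSq_neg ha]
  ring

lemma profileDenom_pos (hw : 0 < w) (hwa : w < a) (hx : x ∈ uIcc (-w) a) :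
    0 < profileDenom a w x := by
  rw [uIcc_of_le (by linarith)] at hx
  rw [profileDenom]
  nlinarith [hx.1]

lemma integral_sqrt_profileSq_mul_deriv (hw : 0 < w) (hwa : w < a) :
    ∫ x in (-w)..a, √(profileSq a w x) * profileSqDeriv a w x = -(2 / 3) := by
  have hq : ∀ x ∈ uIcc (-w) a, profileDenom a w x ≠ 0 := fun x hx =>
    (profileDenom_pos hw hwa hx).ne'
  have hsubst := integral_comp_mul_deriv (g := Real.sqrt)
    (fun x hx => hasDerivAt_profileSq (hq x hx)) (continuousOn_profileSqDeriv hq)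
    Real.continuous_sqrt
  rwa [profileSq_neg (pow_lt_pow_left₀ hwa hw.le two_ne_zero).ne', profileSq_self,
    integral_symm 0 1, integral_sqrt_zero_one] at hsubst

lemma integral_sqrt_profileSq_reflect (hw : 0 < w) (hwa : w < a) :
    ∫ x in (-a)..(-w), √(profileSq a w x) =
      (∫ x in (-w)..a, √(profileSq a w x)) +
        2 * w * ∫ x in (-w)..a, √(profileSq a w x) * profileSqDeriv a w x := by
  have ha : a ^ 2 ≠ w ^ 2 := (pow_lt_pow_left₀ hwa hw.le two_ne_zero).ne'
  have hq : ∀ x ∈ uIcc (-w) a, profileDenom a w x ≠ 0 := fun x hx =>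
    (profileDenom_pos hw hwa hx).ne'
  have hq_image : ∀ y ∈ profileReflect a w '' uIcc (-w) a, profileDenom a w y ≠ 0 := by
    rintro _ ⟨x, hx, rfl⟩
    rw [profileDenom_profileReflect (hq x hx)]
    exact div_ne_zero (pow_ne_zero 2 (sub_ne_zero.mpr ha)) (hq x hx)
  have hsubst := integral_comp_mul_deriv' (fun x hx => hasDerivAt_profileReflect (hq x hx))
    (continuousOn_const.sub (continuousOn_const.mul (continuousOn_profileSqDeriv hq)))
    (continuousOn_profileSq hq_image).sqrt
  rw [profileReflect_neg ha, profileReflect_self] at hsubst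
  have hsqrt := (continuousOn_profileSq hq).sqrt
  have hprod := hsqrt.mul (continuousOn_profileSqDeriv hq)
  rw [integral_congr (g := fun x => -√(profileSq a w x) -
      2 * w * (√(profileSq a w x) * profileSqDeriv a w x)) fun x hx => by
        simp only [Function.comp, profileSq_profileReflect (hq x hx) ha]; ring,
    integral_sub (f := fun x => -√(profileSq a w x))
      (g := fun x => 2 * w * (√(profileSq a w x) * profileSqDeriv a w x))
      hsqrt.intervalIntegrable.neg (hprod.intervalIntegrable.const_mul _),
    integral_neg, integral_const_mul, integral_symm (-a) (-w)] at hsubst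
  linarith

end

theorem area_diff_case_w_lt_a_general (a b w : ℝ) (hw : 0 < w) (hwa : w < a) :
    (2 * ∫ x in (-w)..a,
        b * Real.sqrt ((a ^ 2 - x ^ 2) / (a ^ 2 + 2 * w * x + w ^ 2))) -
      (2 * ∫ x in (-a)..(-w),
        b * Real.sqrt ((a ^ 2 - x ^ 2) / (a ^ 2 + 2 * w * x + w ^ 2))) =
      8 / 3 * b * w := by
  change (2 * ∫ x in (-w)..a, b * √(profileSq a w x)) -
    (2 * ∫ x in (-a)..(-w), b * √(profileSq a w x)) = _
  rw [integral_const_mul, integral_const_mul, integral_sqrt_profileSq_reflect hw hwa,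
    integral_sqrt_profileSq_mul_deriv hw hwa]
  ring

theorem area_diff_case_w_lt_a (a b w : ℝ) (hw : 0 < w) (hwa : w < a) (hb : 0 < b) :
    (2 * ∫ x in (-w)..a,
        b * Real.sqrt ((a ^ 2 - x ^ 2) / (a ^ 2 + 2 * w * x + w ^ 2))) -
      (2 * ∫ x in (-a)..(-w),
        b * Real.sqrt ((a ^ 2 - x ^ 2) / (a ^ 2 + 2 * w * x + w ^ 2))) =
      8 / 3 * b * w :=
  area_diff_case_w_lt_a_general a b w hw hwa
end

section
/- For 0 < a < w and b > 0, with u = -a²/w, the difference A₂ − A₁ = 2∫_{u}^{a} f₁ − 2∫_{-a}^{u} f₁ equals (8/3)·a³b/w², where f₁(x) = b√((a²-x²)/(a²+2wx+w²)). -/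
/-! With `D(x) = a² + 2wx + w²`, the integrand `g = √((a² - x²) / D)` has no elementary
antiderivative, but it is invariant under the involution `ψ` that acts on `D` as
`D ↦ (w² - a²)² / D`. Since `ψ` fixes `u = -a²/w` and swaps `-a` with `a`, the substitution
`x = ψ y` turns `∫_{-a}^u g` into `-∫_u^a ψ' g`, so `A₂ - A₁ = 2 ∫_u^a (1 + ψ') g`. This
integrand is the derivative of `-(4w/3) g³`, which vanishes at `a` and equals `-(4w/3) (a/w)³` at `u`. -/

open Set intervalIntegral

theorem integral_sub_integral_eq_sub_of_comp_eqOn {g ψ ψ' F : ℝ → ℝ} {u v : ℝ} (huv : u ≤ v)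
    (hψ : ∀ x ∈ Icc u v, HasDerivAt ψ (ψ' x) x) (hψ' : ContinuousOn ψ' (Icc u v))
    (hg : ContinuousOn g (ψ '' Icc u v)) (hgψ : EqOn (g ∘ ψ) g (Icc u v))
    (hF : ContinuousOn F (Icc u v)) (hF' : ∀ x ∈ Ioo u v, HasDerivAt F ((1 + ψ' x) * g x) x) :
    (∫ x in u..v, g x) - ∫ x in ψ v..ψ u, g x = F v - F u := by
  rw [← uIcc_of_le huv] at hψ hψ' hg hgψ
  have hgψ_cont : ContinuousOn (g ∘ ψ) (uIcc u v) :=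
    hg.comp (fun x hx => (hψ x hx).continuousAt.continuousWithinAt) (mapsTo_image ψ _)
  have hg_cont : ContinuousOn g (uIcc u v) := hgψ_cont.congr hgψ.symm
  have hsubst : ∫ x in ψ v..ψ u, g x = -∫ x in u..v, ψ' x * g x := by
    rw [integral_symm, ← integral_comp_mul_deriv' hψ hψ' hg]
    refine congrArg _ (integral_congr fun x hx => ?_)
    simp only [hgψ hx, mul_comm]
  have hψg : IntervalIntegrable (fun x => ψ' x * g x) MeasureTheory.volume u v :=
    (hψ'.mul hg_cont).intervalIntegrable
  calc (∫ x in u..v, g x) - ∫ x in ψ v..ψ u, g x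
      = ∫ x in u..v, g x + ψ' x * g x := by
        rw [hsubst, integral_add hg_cont.intervalIntegrable hψg, sub_neg_eq_add]
    _ = ∫ x in u..v, (1 + ψ' x) * g x := integral_congr fun x _ => by ring
    _ = F v - F u := integral_eq_sub_of_hasDerivAt_of_le huv hF hF'
        ((continuousOn_const.add hψ').mul hg_cont).intervalIntegrable

namespace AreaDiff

variable (a w : ℝ)

noncomputable def denom (x : ℝ) : ℝ := a ^ 2 + 2 * w * x + w ^ 2

noncomputable def ratio (x : ℝ) : ℝ := (a ^ 2 - x ^ 2) / denom a w x

noncomputable def reflection (x : ℝ) : ℝ :=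
  ((w ^ 2 - a ^ 2) ^ 2 / denom a w x - a ^ 2 - w ^ 2) / (2 * w)

variable {a w}

theorem hasDerivAt_denom (x : ℝ) : HasDerivAt (denom a w) (2 * w) x := by
  have : HasDerivAt (fun x => a ^ 2 + 2 * w * x + w ^ 2) (2 * w) x := by
    simpa using (((hasDerivAt_id x).const_mul (2 * w)).const_add (a ^ 2)).add_const (w ^ 2)
  exact this

theorem continuous_denom : Continuous (denom a w) := by
  unfold denom
  fun_prop

theorem denom_neg_sq_div (hw : w ≠ 0) : denom a w (-a ^ 2 / w) = w ^ 2 - a ^ 2 := by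
  unfold denom
  field_simp
  ring

theorem sq_sub_sq_le_denom (hw : 0 < w) {x : ℝ} (hx : -a ^ 2 / w ≤ x) :
    w ^ 2 - a ^ 2 ≤ denom a w x := by
  rw [div_le_iff₀ hw] at hx
  unfold denom
  nlinarith

theorem eq_of_denom_eq (hw : w ≠ 0) {x D : ℝ} (h : denom a w x = D) :
    x = (D - a ^ 2 - w ^ 2) / (2 * w) := by
  rw [← h, denom]
  field_simp
  ring

theorem hasDerivAt_ratio {x : ℝ} (hx : denom a w x ≠ 0) :
    HasDerivAt (ratio a w)
      ((-(2 * x) * denom a w x - (a ^ 2 - x ^ 2) * (2 * w)) / denom a w x ^ 2) x := by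
  have : HasDerivAt (fun x => (a ^ 2 - x ^ 2) / denom a w x) _ x :=
    ((hasDerivAt_pow 2 x).const_sub (a ^ 2)).div (hasDerivAt_denom x) hx
  exact this.congr_deriv (by ring)

theorem continuousOn_sqrt_ratio : ContinuousOn (fun x => √(ratio a w x)) {x | denom a w x ≠ 0} :=
  Real.continuous_sqrt.comp_continuousOn
    ((continuous_const.sub (continuous_pow 2)).continuousOn.div continuous_denom.continuousOn
      fun _ hx => hx)

theorem ratio_self : ratio a w a = 0 := by
  rw [ratio, sub_self, zero_div]

theorem ratio_neg_sq_div (hw : w ≠ 0) (haw : w ^ 2 - a ^ 2 ≠ 0) :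
    ratio a w (-a ^ 2 / w) = (a / w) ^ 2 := by
  rw [ratio, denom_neg_sq_div hw]
  field_simp

theorem denom_reflection (hw : w ≠ 0) (x : ℝ) :
    denom a w (reflection a w x) = (w ^ 2 - a ^ 2) ^ 2 / denom a w x := by
  unfold reflection denom
  field_simp
  ring

theorem sq_sub_reflection_sq (hw : w ≠ 0) {x : ℝ} (hx : denom a w x ≠ 0) :
    a ^ 2 - reflection a w x ^ 2 = (w ^ 2 - a ^ 2) ^ 2 * (a ^ 2 - x ^ 2) / denom a w x ^ 2 := by
  rw [reflection]
  generalize hD : denom a w x = D at hx ⊢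
  obtain rfl := eq_of_denom_eq hw hD
  field_simp
  ring

theorem ratio_reflection (hw : w ≠ 0) (haw : w ^ 2 - a ^ 2 ≠ 0) {x : ℝ} (hx : denom a w x ≠ 0) :
    ratio a w (reflection a w x) = ratio a w x := by
  rw [ratio, ratio, denom_reflection hw, sq_sub_reflection_sq hw hx]
  field_simp

theorem hasDerivAt_reflection (hw : w ≠ 0) {x : ℝ} (hx : denom a w x ≠ 0) :
    HasDerivAt (reflection a w) (-(w ^ 2 - a ^ 2) ^ 2 / denom a w x ^ 2) x := by
  have : HasDerivAt (fun x => ((w ^ 2 - a ^ 2) ^ 2 / denom a w x - a ^ 2 - w ^ 2) / (2 * w)) _ x :=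
    ((((hasDerivAt_const x ((w ^ 2 - a ^ 2) ^ 2)).div (hasDerivAt_denom x) hx).sub_const
      (a ^ 2)).sub_const (w ^ 2)).div_const (2 * w)
  refine this.congr_deriv ?_
  field_simp
  ring

theorem reflection_neg_sq_div (hw : w ≠ 0) :
    reflection a w (-a ^ 2 / w) = -a ^ 2 / w := by
  rw [reflection, denom_neg_sq_div hw]
  field_simp
  ring

theorem reflection_self (hw : w ≠ 0) (haw : a + w ≠ 0) : reflection a w a = -a := by
  unfold reflection denom
  rw [show a ^ 2 + 2 * w * a + w ^ 2 = (a + w) ^ 2 by ring]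
  field_simp
  ring

theorem hasDerivAt_sqrt_ratio_pow_three {x : ℝ} (hx : 0 < ratio a w x) :
    HasDerivAt (fun x => -(4 * w / 3) * √(ratio a w x) ^ 3)
      ((1 - (w ^ 2 - a ^ 2) ^ 2 / denom a w x ^ 2) * √(ratio a w x)) x := by
  have hD : denom a w x ≠ 0 := fun h => by simp [ratio, h] at hx
  have key : -(2 * w) * ((-(2 * x) * denom a w x - (a ^ 2 - x ^ 2) * (2 * w)) / denom a w x ^ 2)
      = 1 - (w ^ 2 - a ^ 2) ^ 2 / denom a w x ^ 2 := by
    field_simp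
    unfold denom
    ring
  have hs : √(ratio a w x) ≠ 0 := (Real.sqrt_pos.mpr hx).ne'
  refine ((((Real.hasDerivAt_sqrt hx.ne').comp x (hasDerivAt_ratio hD)).pow 3).const_mul
    (-(4 * w / 3))).congr_deriv ?_
  rw [← key, Function.comp_apply]
  field_simp
  ring

theorem integral_sqrt_ratio_sub_integral (ha : 0 < a) (haw : a < w) :
    (∫ x in (-a ^ 2 / w)..a, √(ratio a w x)) - (∫ x in (-a)..(-a ^ 2 / w), √(ratio a w x)) =
      4 / 3 * a ^ 3 / w ^ 2 := by
  have hw : 0 < w := ha.trans haw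
  have hc : 0 < w ^ 2 - a ^ 2 := by nlinarith
  have hu : -a < -a ^ 2 / w := by rw [lt_div_iff₀ hw]; nlinarith
  have hua : -a ^ 2 / w < a := by rw [div_lt_iff₀ hw]; nlinarith
  have hD : ∀ x ∈ Icc (-a ^ 2 / w) a, 0 < denom a w x := fun x hx =>
    hc.trans_le (sq_sub_sq_le_denom hw hx.1)
  have hg : ContinuousOn (fun x => √(ratio a w x)) (Icc (-a ^ 2 / w) a) :=
    continuousOn_sqrt_ratio.mono fun x hx => (hD x hx).ne'
  have key := integral_sub_integral_eq_sub_of_comp_eqOn (g := fun x => √(ratio a w x))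
    (ψ := reflection a w) (F := fun x => -(4 * w / 3) * √(ratio a w x) ^ 3) hua.le
    (fun x hx => hasDerivAt_reflection hw.ne' (hD x hx).ne')
    (continuousOn_const.div (continuous_denom.pow 2).continuousOn
      fun x hx => pow_ne_zero 2 (hD x hx).ne')
    (continuousOn_sqrt_ratio.mono ?_)
    (fun x hx => by simp only [Function.comp_apply, ratio_reflection hw.ne' hc.ne' (hD x hx).ne'])
    (continuousOn_const.mul (hg.pow 3))
    (fun x hx => (hasDerivAt_sqrt_ratio_pow_three ?_).congr_deriv (by ring))
  · rw [reflection_self hw.ne' (by linarith), reflection_neg_sq_div hw.ne'] at key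
    rw [key, ratio_self, ratio_neg_sq_div hw.ne' hc.ne', Real.sqrt_sq (by positivity)]
    field_simp
    ring
  · rintro _ ⟨x, hx, rfl⟩
    show denom a w (reflection a w x) ≠ 0
    rw [denom_reflection hw.ne']
    exact div_ne_zero (pow_ne_zero 2 hc.ne') (hD x hx).ne'
  · exact div_pos (by nlinarith [hx.1, hx.2]) (hD x (Ioo_subset_Icc_self hx))

end AreaDiff

theorem area_diff_case_a_lt_w_general (a b w : ℝ) (ha : 0 < a) (haw : a < w) :
    (2 * ∫ x in (-a ^ 2 / w)..a,
        b * Real.sqrt ((a ^ 2 - x ^ 2) / (a ^ 2 + 2 * w * x + w ^ 2))) -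
      (2 * ∫ x in (-a)..(-a ^ 2 / w),
        b * Real.sqrt ((a ^ 2 - x ^ 2) / (a ^ 2 + 2 * w * x + w ^ 2))) =
      8 / 3 * a ^ 3 * b / w ^ 2 := by
  have key := AreaDiff.integral_sqrt_ratio_sub_integral ha haw
  simp only [AreaDiff.ratio, AreaDiff.denom] at key
  rw [integral_const_mul, integral_const_mul]
  linear_combination 2 * b * key

theorem area_diff_case_a_lt_w (a b w : ℝ) (ha : 0 < a) (haw : a < w) (hb : 0 < b) :
    (2 * ∫ x in (-a ^ 2 / w)..a,
        b * Real.sqrt ((a ^ 2 - x ^ 2) / (a ^ 2 + 2 * w * x + w ^ 2))) -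
      (2 * ∫ x in (-a)..(-a ^ 2 / w),
        b * Real.sqrt ((a ^ 2 - x ^ 2) / (a ^ 2 + 2 * w * x + w ^ 2))) =
      8 / 3 * a ^ 3 * b / w ^ 2 :=
  area_diff_case_a_lt_w_general a b w ha haw
end
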